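/- arXiv:1805.00235 — 2 statements merged into one kernel-verified Lean document; each statement's English description precedes it below -/
import Mathlib

section
/- Let μ : ℝ³ → ℝ be twice continuously differentiable with μ(z) > 0 for all z, and define the parametrix q^k(x,y) = (μ(x)/μ(y)) q̊^k(x,y), u_j^k(x,y) = (1/μ(y)) ů_j^k(x,y). Then for all x ≠ y in ℝ³ and all j,k ∈ {1,2,3}, applying the variable-viscosity Stokes operator in x to the parametrix yields exactly the remainder: 𝒜_j(q^k(·,y), u^k(·,y))(x) = R_kj(x,y), where R_kj(x,y) = (3/(4πμ(y))) ∑_{i=1}^3 ∂_iμ(x) (x_i−y_i)(x_j−y_j)(x_k−y_k)/‖x−y‖^5 = (1/μ(y)) ∑_{i=1}^3 ∂_iμ(x) σ̊_ij(q̊^k, ů^k)(x,y). -/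
open MeasureTheory Real

noncomputable section

/-- 3-dimensional Euclidean space. -/
abbrev E3 : Type := EuclideanSpace ℝ (Fin 3)

/-- The `i`-th standard basis vector of `ℝ³`. -/
def e3 (i : Fin 3) : E3 := EuclideanSpace.single i (1 : ℝ)

/-- Pressure fundamental solution of the constant-viscosity Stokes system:
`q̊^k(x,y) = -(x_k - y_k)/(4π‖x-y‖³)`. -/
def qF (k : Fin 3) (x y : E3) : ℝ := -(x k - y k) / (4 * π * ‖x - y‖ ^ 3)

/-- Velocity fundamental solution of the constant-viscosity incompressible Stokes system:
`ů_j^k(x,y) = -(1/8π)(δ_j^k/‖x-y‖ + (x_j-y_j)(x_k-y_k)/‖x-y‖³)`. -/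
def uF (j k : Fin 3) (x y : E3) : ℝ :=
  -(1 / (8 * π)) * ((if j = k then (1 : ℝ) else 0) / ‖x - y‖ +
    (x j - y j) * (x k - y k) / ‖x - y‖ ^ 3)

/-- Partial derivative in the `i`-th coordinate direction. -/
def pd (i : Fin 3) (f : E3 → ℝ) (x : E3) : ℝ := fderiv ℝ f x (e3 i)

/-- The Laplacian `Δf = ∑ ∂²f/∂x_i²`. -/
def lap (f : E3 → ℝ) (x : E3) : ℝ := ∑ i : Fin 3, pd i (fun z => pd i f z) x

/-- Divergence of a vector field given componentwise. -/
def divg (v : Fin 3 → E3 → ℝ) (x : E3) : ℝ := ∑ l : Fin 3, pd l (v l) x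

/-- Constant-viscosity (μ=1) stress tensor
`σ̊_ij(p,v)(x) = -δ_i^j p(x) + ∂_j v_i(x) + ∂_i v_j(x) - (2/3) δ_i^j div v(x)`. -/
def sigma0 (p : E3 → ℝ) (v : Fin 3 → E3 → ℝ) (i j : Fin 3) (x : E3) : ℝ :=
  -(if i = j then p x else 0) + pd j (v i) x + pd i (v j) x
    - (2 / 3) * (if i = j then divg v x else 0)

/-- Variable-viscosity stress tensor
`σ_ij(p,v)(x) = -δ_i^j p(x) + μ(x)(∂_j v_i(x) + ∂_i v_j(x) - (2/3) δ_i^j div v(x))`. -/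
def sigmaMu (μ : E3 → ℝ) (p : E3 → ℝ) (v : Fin 3 → E3 → ℝ) (i j : Fin 3) (x : E3) : ℝ :=
  -(if i = j then p x else 0) + μ x * (pd j (v i) x + pd i (v j) x
    - (2 / 3) * (if i = j then divg v x else 0))

/-- Variable-viscosity compressible Stokes operator
`𝒜_j(p,v)(x) = ∑_i ∂_i[μ(x)(∂_i v_j + ∂_j v_i - (2/3) δ_i^j div v)] - ∂_j p(x)`. -/
def stokesA (μ : E3 → ℝ) (p : E3 → ℝ) (v : Fin 3 → E3 → ℝ) (j : Fin 3) (x : E3) : ℝ :=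
  (∑ i : Fin 3, pd i (fun z => μ z * (pd i (v j) z + pd j (v i) z
      - (2 / 3) * (if i = j then divg v z else 0))) x) - pd j p x

/-- The weakly singular remainder
`R_kj(x,y) = (3/(4πμ(y))) ∑_i ∂_iμ(x) (x_i-y_i)(x_j-y_j)(x_k-y_k)/‖x-y‖⁵`. -/
def Rrem (μ : E3 → ℝ) (k j : Fin 3) (x y : E3) : ℝ :=
  (3 / (4 * π * μ y)) * ∑ i : Fin 3, pd i μ x *
    ((x i - y i) * (x j - y j) * (x k - y k) / ‖x - y‖ ^ 5)

/-! The symmetric gradient of the Stokeslet is `∂ᵢůⱼ + ∂ⱼůᵢ = δᵢⱼ q̊ + Tᵢⱼ`, where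
`Tᵢⱼ = 3 rᵢ rⱼ rₖ / (4π ‖r‖⁵)` and `r = x - y`. Its trace gives `div ů = 0`, hence
`σ̊ᵢⱼ(q̊, ů) = Tᵢⱼ`. For the parametrix, the term `δᵢⱼ q̊` turns `∑ᵢ ∂ᵢ[μ (∂ᵢuⱼ + ∂ⱼuᵢ)]` into
`(∂ⱼ(μ q̊) + ∑ᵢ ∂ᵢ(μ Tᵢⱼ)) / μ(y)`, whose first part cancels the pressure gradient; as `T` is
divergence free in `i`, only `∑ᵢ ∂ᵢμ Tᵢⱼ / μ(y)` remains. All derivatives are taken of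
polynomials in `z - y` and `‖z - y‖⁻¹`, using `∂ᵢ‖z - y‖⁻¹ = -(zᵢ - yᵢ) ‖z - y‖⁻³`. -/

def stokesletStress (i j k : Fin 3) (z y : E3) : ℝ :=
  3 / (4 * π) * ((z i - y i) * (z j - y j) * (z k - y k) / ‖z - y‖ ^ 5)

section

open Topology

variable {x y : E3}

lemma pd_eq_of_hasFDerivAt {f : E3 → ℝ} {L : E3 →L[ℝ] ℝ} (h : HasFDerivAt f L x) (i : Fin 3) :
    pd i f x = L (e3 i) := by
  rw [pd, h.fderiv]

lemma pd_const_mul (c : ℝ) (f : E3 → ℝ) (i : Fin 3) :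
    pd i (fun z => c * f z) x = c * pd i f x := by
  simp [pd, ← smul_eq_mul, ← Pi.smul_def, fderiv_const_smul_field]

lemma divg_const_mul (c : ℝ) (v : Fin 3 → E3 → ℝ) :
    divg (fun l z => c * v l z) x = c * divg v x := by
  simp only [divg, pd_const_mul, Finset.mul_sum]

lemma pd_add {f g : E3 → ℝ} (hf : DifferentiableAt ℝ f x) (hg : DifferentiableAt ℝ g x)
    (i : Fin 3) : pd i (fun z => f z + g z) x = pd i f x + pd i g x := by
  simp [pd, fderiv_fun_add hf hg]

lemma pd_mul {f g : E3 → ℝ} (hf : DifferentiableAt ℝ f x) (hg : DifferentiableAt ℝ g x)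
    (i : Fin 3) : pd i (fun z => f z * g z) x = pd i f x * g x + f x * pd i g x := by
  simp only [pd, fderiv_fun_mul hf hg, add_apply, smul_apply, smul_eq_mul]
  ring

lemma proj_e3 (a i : Fin 3) : EuclideanSpace.proj (𝕜 := ℝ) a (e3 i) = if i = a then 1 else 0 := by
  simp [e3, eq_comm]

lemma inner_e3 (v : E3) (i : Fin 3) : inner ℝ v (e3 i) = v i := by
  simp [e3, EuclideanSpace.inner_single_right]

lemma hasFDerivAt_sub_coord (a : Fin 3) (y x : E3) :
    HasFDerivAt (fun z : E3 => z a - y a) (EuclideanSpace.proj (𝕜 := ℝ) a) x := by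
  simpa using ((EuclideanSpace.proj (𝕜 := ℝ) a).hasFDerivAt (x := x)).sub_const (y a)

lemma hasFDerivAt_inv_norm_sub (h : x ≠ y) :
    HasFDerivAt (fun z : E3 => ‖z - y‖⁻¹) (-(‖x - y‖⁻¹ ^ 3) • innerSL ℝ (x - y)) x := by
  have hne : ‖x - y‖ ≠ 0 := norm_ne_zero_iff.2 (sub_ne_zero.2 h)
  have hnorm : HasFDerivAt (fun z : E3 => ‖z - y‖) (‖x - y‖⁻¹ • innerSL ℝ (x - y)) x := by
    have := (((hasFDerivAt_id x).sub_const y).norm_sq).sqrt (pow_ne_zero 2 hne)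
    simp only [id, Real.sqrt_sq (norm_nonneg _)] at this
    refine this.congr_fderiv ?_
    ext v
    simp only [map_sub, ContinuousLinearMap.comp_id, smul_apply, sub_apply, coe_innerSL_apply,
      nsmul_eq_mul, Nat.cast_ofNat, smul_eq_mul]
    field_simp
  refine ((hasDerivAt_inv hne).comp_hasFDerivAt x hnorm).congr_fderiv ?_
  ext v
  simp only [map_sub, smul_apply, sub_apply, coe_innerSL_apply, smul_eq_mul]
  ring

lemma sum_sq_sub_mul_inv_norm_sq (h : x ≠ y) :
    (∑ l, (x l - y l) ^ 2) * ‖x - y‖⁻¹ ^ 2 = 1 := by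
  have hne : ‖x - y‖ ≠ 0 := norm_ne_zero_iff.2 (sub_ne_zero.2 h)
  rw [show ∑ l, (x l - y l) ^ 2 = ‖x - y‖ ^ 2 by simp [EuclideanSpace.real_norm_sq_eq]]
  field_simp

lemma pd_uF (h : x ≠ y) (i j k : Fin 3) :
    pd i (fun z => uF j k z y) x = -(1 / (8 * π)) *
      (((if i = j then 1 else 0) * (x k - y k) + (if i = k then 1 else 0) * (x j - y j)
          - (if j = k then 1 else 0) * (x i - y i)) * ‖x - y‖⁻¹ ^ 3
        - 3 * (x i - y i) * (x j - y j) * (x k - y k) * ‖x - y‖⁻¹ ^ 5) := by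
  have hs := hasFDerivAt_inv_norm_sub h
  have hu := ((hs.const_mul (if j = k then (1 : ℝ) else 0)).fun_add
    (((hasFDerivAt_sub_coord j y x).fun_mul (hasFDerivAt_sub_coord k y x)).fun_mul
      (hs.pow 3))).const_mul (-(1 / (8 * π)))
  rw [show (fun z => uF j k z y) = fun z => -(1 / (8 * π)) * ((if j = k then (1 : ℝ) else 0) *
      ‖z - y‖⁻¹ + (z j - y j) * (z k - y k) * ‖z - y‖⁻¹ ^ 3) from funext fun z => by rw [uF]; ring,
    pd_eq_of_hasFDerivAt hu]
  simp only [add_apply, smul_apply, smul_eq_mul, nsmul_eq_mul, innerSL_apply_apply, inner_e3,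
    proj_e3, PiLp.sub_apply]
  ring

lemma pd_uF_add_pd_uF (h : x ≠ y) (i j k : Fin 3) :
    pd i (fun z => uF j k z y) x + pd j (fun z => uF i k z y) x
      = (if i = j then qF k x y else 0) + stokesletStress i j k x y := by
  simp only [pd_uF h, qF, stokesletStress, @eq_comm _ j i]
  split_ifs <;> ring

lemma divg_uF_eq_zero (h : x ≠ y) (k : Fin 3) : divg (fun l z => uF l k z y) x = 0 := by
  have hdiag (l : Fin 3) : 2 * pd l (fun z => uF l k z y) x
      = qF k x y + stokesletStress l l k x y := by
    simpa [two_mul] using pd_uF_add_pd_uF h l l k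
  have := sum_sq_sub_mul_inv_norm_sq h
  simp only [qF, stokesletStress] at hdiag
  simp only [divg, Fin.sum_univ_three] at this ⊢
  linear_combination (hdiag 0 + hdiag 1 + hdiag 2) / 2
    + 3 / (8 * π) * (x k - y k) * ‖x - y‖⁻¹ ^ 3 * this

lemma differentiableAt_qF (h : x ≠ y) (k : Fin 3) : DifferentiableAt ℝ (fun z => qF k z y) x := by
  rw [show (fun z => qF k z y) = fun z => -(1 / (4 * π)) * ((z k - y k) * ‖z - y‖⁻¹ ^ 3) from
    funext fun z => by rw [qF]; ring]
  exact (((hasFDerivAt_sub_coord k y x).fun_mul ((hasFDerivAt_inv_norm_sub h).pow 3)).const_mul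
    _).differentiableAt

lemma stokesletStress_eq_mul_inv_norm_pow (i j k : Fin 3) :
    (fun z => stokesletStress i j k z y)
      = fun z => 3 / (4 * π) * ((z i - y i) * (z j - y j) * (z k - y k) * ‖z - y‖⁻¹ ^ 5) :=
  funext fun z => by rw [stokesletStress]; ring

lemma differentiableAt_stokesletStress (h : x ≠ y) (i j k : Fin 3) :
    DifferentiableAt ℝ (fun z => stokesletStress i j k z y) x := by
  rw [stokesletStress_eq_mul_inv_norm_pow]
  exact (((((hasFDerivAt_sub_coord i y x).fun_mul (hasFDerivAt_sub_coord j y x)).fun_mul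
    (hasFDerivAt_sub_coord k y x)).fun_mul ((hasFDerivAt_inv_norm_sub h).pow 5)).const_mul
    _).differentiableAt

lemma pd_stokesletStress (h : x ≠ y) (l i j k : Fin 3) :
    pd l (fun z => stokesletStress i j k z y) x = 3 / (4 * π) *
      (((if l = i then 1 else 0) * (x j - y j) * (x k - y k)
          + (if l = j then 1 else 0) * (x i - y i) * (x k - y k)
          + (if l = k then 1 else 0) * (x i - y i) * (x j - y j)) * ‖x - y‖⁻¹ ^ 5
        - 5 * (x i - y i) * (x j - y j) * (x k - y k) * (x l - y l) * ‖x - y‖⁻¹ ^ 7) := by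
  have hT := ((((hasFDerivAt_sub_coord i y x).fun_mul (hasFDerivAt_sub_coord j y x)).fun_mul
    (hasFDerivAt_sub_coord k y x)).fun_mul ((hasFDerivAt_inv_norm_sub h).pow 5)).const_mul
    (3 / (4 * π))
  rw [stokesletStress_eq_mul_inv_norm_pow, pd_eq_of_hasFDerivAt hT]
  simp only [add_apply, smul_apply, smul_eq_mul, nsmul_eq_mul, innerSL_apply_apply, inner_e3,
    proj_e3, PiLp.sub_apply]
  ring

lemma sum_pd_stokesletStress_eq_zero (h : x ≠ y) (j k : Fin 3) :
    ∑ i, pd i (fun z => stokesletStress i j k z y) x = 0 := by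
  have key : ‖x - y‖⁻¹ ^ 5 = (∑ l, (x l - y l) ^ 2) * ‖x - y‖⁻¹ ^ 7 := by
    linear_combination (-‖x - y‖⁻¹ ^ 5) * sum_sq_sub_mul_inv_norm_sq h
  -- with `‖x - y‖⁻¹ ^ 5` traded for `(∑ rₗ²) ‖x - y‖⁻¹ ^ 7` the identity becomes polynomial
  simp only [pd_stokesletStress h, key, Fin.sum_univ_three]
  fin_cases j <;> fin_cases k <;>
    simp only [Fin.zero_eta, Fin.mk_one, Fin.reduceFinMk, Fin.isValue, Fin.reduceEq, reduceIte] <;>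
    ring

lemma sigma0_eq_stokesletStress (h : x ≠ y) (i j k : Fin 3) :
    sigma0 (fun z => qF k z y) (fun l z => uF l k z y) i j x = stokesletStress i j k x y := by
  have := pd_uF_add_pd_uF h i j k
  rw [sigma0, divg_uF_eq_zero h, ite_self, mul_zero, sub_zero]
  linarith

lemma Rrem_eq_sum (μ : E3 → ℝ) (k j : Fin 3) (x y : E3) :
    Rrem μ k j x y = 1 / μ y * ∑ i, pd i μ x * stokesletStress i j k x y := by
  simp only [Rrem, stokesletStress, Finset.mul_sum]
  exact Finset.sum_congr rfl fun i _ => by ring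

lemma pd_stokesA_summand {μ : E3 → ℝ} (hμ : DifferentiableAt ℝ μ x) (h : x ≠ y) (i j k : Fin 3) :
    pd i (fun z => μ z * (pd i (fun w => 1 / μ y * uF j k w y) z
        + pd j (fun w => 1 / μ y * uF i k w y) z
        - 2 / 3 * (if i = j then divg (fun l w => 1 / μ y * uF l k w y) z else 0))) x
      = (if i = j then pd j (fun z => μ z / μ y * qF k z y) x else 0)
        + (pd i μ x * stokesletStress i j k x y
          + μ x * pd i (fun z => stokesletStress i j k z y) x) / μ y := by
  have hev : (fun z => μ z * (pd i (fun w => 1 / μ y * uF j k w y) z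
        + pd j (fun w => 1 / μ y * uF i k w y) z
        - 2 / 3 * (if i = j then divg (fun l w => 1 / μ y * uF l k w y) z else 0)))
      =ᶠ[𝓝 x] fun z => (if i = j then μ z / μ y * qF k z y else 0)
        + 1 / μ y * (μ z * stokesletStress i j k z y) := by
    filter_upwards [isOpen_ne.mem_nhds h] with z hz
    have := pd_uF_add_pd_uF hz i j k
    rw [pd_const_mul, pd_const_mul, divg_const_mul, divg_uF_eq_zero hz]
    split_ifs at this ⊢ <;> linear_combination (μ z / μ y) * this
  have hT := differentiableAt_stokesletStress h i j k
  have hp : DifferentiableAt ℝ (fun z => μ z / μ y * qF k z y) x := by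
    simpa only [div_eq_mul_inv] using (hμ.mul_const (μ y)⁻¹).fun_mul (differentiableAt_qF h k)
  rw [pd, hev.fderiv_eq, ← pd]
  by_cases hij : i = j
  · subst hij
    simp only [if_true]
    rw [pd_add hp ((hμ.fun_mul hT).const_mul _),
      pd_const_mul, pd_mul hμ hT]
    ring
  · simp only [hij, if_false, zero_add]
    rw [pd_const_mul, pd_mul hμ hT]
    ring

lemma stokesA_parametrix {μ : E3 → ℝ} (hμ : DifferentiableAt ℝ μ x) (h : x ≠ y) (j k : Fin 3) :
    stokesA μ (fun z => μ z / μ y * qF k z y) (fun l z => 1 / μ y * uF l k z y) j x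
      = 1 / μ y * ∑ i, pd i μ x * stokesletStress i j k x y := by
  rw [stokesA]
  simp only [pd_stokesA_summand hμ h, Finset.sum_add_distrib, Finset.sum_ite_eq', Finset.mem_univ,
    if_true, ← Finset.sum_div, ← Finset.mul_sum, sum_pd_stokesletStress_eq_zero h]
  ring

end

theorem stmt9_general (μ : E3 → ℝ) (hμ : ContDiff ℝ 2 μ)
    (x y : E3) (hxy : x ≠ y) (j k : Fin 3) :
    stokesA μ (fun z => (μ z / μ y) * qF k z y) (fun l z => (1 / μ y) * uF l k z y) j x
      = Rrem μ k j x y ∧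
    Rrem μ k j x y
      = (1 / μ y) * ∑ i : Fin 3,
          pd i μ x * sigma0 (fun z => qF k z y) (fun l z => uF l k z y) i j x := by
  have hμx : DifferentiableAt ℝ μ x := hμ.differentiable (by norm_num) x
  refine ⟨by rw [stokesA_parametrix hμx hxy, Rrem_eq_sum], ?_⟩
  simp only [Rrem_eq_sum, sigma0_eq_stokesletStress hxy]

/-- For μ ∈ C² positive, applying the variable-viscosity Stokes operator in x to
the parametrix q^k(x,y) = (μ(x)/μ(y)) q̊^k(x,y), u_j^k(x,y) = (1/μ(y)) ů_j^k(x,y) yields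
exactly the remainder: 𝒜_j(q^k(·,y), u^k(·,y))(x) = R_kj(x,y), where
R_kj(x,y) = (3/(4πμ(y))) ∑_i ∂_iμ(x)(x_i-y_i)(x_j-y_j)(x_k-y_k)/‖x-y‖⁵
          = (1/μ(y)) ∑_i ∂_iμ(x) σ̊_ij(q̊^k, ů^k)(x,y). -/
theorem stmt9 (μ : E3 → ℝ) (hμ : ContDiff ℝ 2 μ) (hpos : ∀ z : E3, 0 < μ z)
    (x y : E3) (hxy : x ≠ y) (j k : Fin 3) :
    stokesA μ (fun z => (μ z / μ y) * qF k z y) (fun l z => (1 / μ y) * uF l k z y) j x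
      = Rrem μ k j x y ∧
    Rrem μ k j x y
      = (1 / μ y) * ∑ i : Fin 3,
          pd i μ x * sigma0 (fun z => qF k z y) (fun l z => uF l k z y) i j x :=
  stmt9_general μ hμ x y hxy j k
end
end

section
/- For every f ∈ C_c^∞(ℝ³,ℝ), the pair consisting of the pressure p = (4/3) f and the velocity v = −Q̊f, where (Q̊f)_j(y) = ∫_{ℝ³} q̊^j(y,x) f(x) dx, satisfies the homogeneous constant-viscosity compressible Stokes system on all of ℝ³: for each j ∈ {1,2,3} and all y ∈ ℝ³, Å_j((4/3)f, −Q̊f)(y) = Δ(−Q̊f)_j(y) + (1/3) ∂_j div(−Q̊f)(y) − (4/3) ∂_j f(y) = 0. -/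
open MeasureTheory Real

noncomputable section

/-!
`q̊^i(y, x) = K_i(y - x)` with `K = ∇N`, where `N(t) = 1/(4π‖t‖)` is the Newtonian potential,
so `Q̊f = K ⋆ f` is formally `∇(N ⋆ f)`. Hence its Jacobian is symmetric and
`div Q̊f = Δ(N ⋆ f) = -f`, which gives `Δ(Q̊f)_j = ∂_j div Q̊f = -∂_j f`; for `v = -Q̊f` this is
`Δv_j + (1/3) ∂_j div v = (4/3) ∂_j f`.

Both identities are proved against test functions by regularising: `N_ε = (‖t‖² + ε²)^(-1/2)/(4π)`
is smooth, `K_ε = ∇N_ε` has divergence `-ρ_ε` where `ρ_ε(t) = ε⁻³ρ_1(t/ε)` is an approximate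
identity of mass one, and integration by parts is legitimate for `ε ≠ 0`. As `ε → 0`,
`|K_ε(t)| ≤ ‖t‖⁻²/(4π)`, which is locally integrable in `ℝ³`, so dominated convergence passes
to the limit.
-/

open Filter Topology
open scoped Convolution

section General

variable {F : Type*} [NormedAddCommGroup F] [InnerProductSpace ℝ F]

theorem hasFDerivAt_rpow_norm_sq_add_sq {ε : ℝ} (hε : ε ≠ 0) (a : ℝ) (t : F) :
    HasFDerivAt (fun s : F => (‖s‖ ^ 2 + ε ^ 2) ^ a)
      ((2 * a * (‖t‖ ^ 2 + ε ^ 2) ^ (a - 1)) • innerSL ℝ t) t := by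
  have hpos : 0 < ‖t‖ ^ 2 + ε ^ 2 := by positivity
  refine (((hasFDerivAt_id t).norm_sq.add_const (ε ^ 2)).rpow_const (p := a)
    (Or.inl hpos.ne')).congr_fderiv ?_
  ext v
  simp only [id, smul_apply, ContinuousLinearMap.comp_apply, ContinuousLinearMap.id_apply,
    smul_eq_mul]
  ring

theorem contDiff_rpow_norm_sq_add_sq {ε : ℝ} (hε : ε ≠ 0) (a : ℝ) {n : WithTop ℕ∞} :
    ContDiff ℝ n (fun s : F => (‖s‖ ^ 2 + ε ^ 2) ^ a) :=
  ((contDiff_norm_sq ℝ).add contDiff_const).rpow_const_of_ne fun s => by positivity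

theorem rpow_sq_add_sq_le {a : ℝ} (ha : a ≤ 0) (ε : ℝ) {r : ℝ} (hr : 0 < r) :
    (r ^ 2 + ε ^ 2) ^ a ≤ r ^ (2 * a) := by
  rw [Real.rpow_mul hr.le, Real.rpow_two]
  exact Real.rpow_le_rpow_of_nonpos (by positivity) (by nlinarith [sq_nonneg ε]) ha

theorem rpow_neg_three_halves_eq_mul {x : ℝ} (hx : 0 < x) :
    x ^ (-(3 / 2) : ℝ) = x * x ^ (-(5 / 2) : ℝ) := by
  rw [← Real.rpow_one_add' hx.le (by norm_num)]
  norm_num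

variable {G : Type*} [NormedAddCommGroup G] [NormedSpace ℝ G]

theorem fderiv_fderiv_apply_comm {ψ : G → ℝ} (hψ : ContDiff ℝ 2 ψ) (x v w : G) :
    fderiv ℝ (fderiv ℝ ψ · v) x w = fderiv ℝ (fderiv ℝ ψ · w) x v := by
  have hd : Differentiable ℝ (fderiv ℝ ψ) := (hψ.fderiv_right le_rfl).differentiable one_ne_zero
  have happly (u : G) : fderiv ℝ (fderiv ℝ ψ · u) x = (fderiv ℝ (fderiv ℝ ψ) x).flip u := by
    rw [fderiv_clm_apply (hd x) (differentiableAt_const u)]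
    simp
  simp only [happly, ContinuousLinearMap.flip_apply]
  exact (hψ.contDiffAt.isSymmSndFDerivAt (by simp)).eq w v

variable [MeasurableSpace G] [BorelSpace G]

theorem integral_mul_fderiv_eq_neg_of_hasCompactSupport [FiniteDimensional ℝ G] {μ : Measure G}
    [μ.IsAddHaarMeasure] {u ψ : G → ℝ} (hu : ContDiff ℝ 1 u) (hψ : ContDiff ℝ 1 ψ)
    (hψc : HasCompactSupport ψ) (v : G) :
    ∫ x, u x * fderiv ℝ ψ x v ∂μ = -∫ x, fderiv ℝ u x v * ψ x ∂μ := by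
  have hu' : Continuous (fderiv ℝ u · v) :=
    (hu.continuous_fderiv one_ne_zero).clm_apply continuous_const
  have hψ' : Continuous (fderiv ℝ ψ · v) :=
    (hψ.continuous_fderiv one_ne_zero).clm_apply continuous_const
  refine integral_mul_fderiv_eq_neg_fderiv_mul_of_integrable ?_ ?_ ?_
    (fun x _ => hu.differentiable one_ne_zero x) (fun x _ => hψ.differentiable one_ne_zero x)
  · exact (hu'.mul hψ.continuous).integrable_of_hasCompactSupport hψc.mul_left
  · exact (hu.continuous.mul hψ').integrable_of_hasCompactSupport
      (hψc.fderiv_apply (𝕜 := ℝ) v).mul_left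
  · exact (hu.continuous.mul hψ.continuous).integrable_of_hasCompactSupport hψc.mul_left

theorem fderiv_convolution_mul_apply {μ : Measure G} [SFinite μ] [μ.IsAddLeftInvariant]
    {K g : G → ℝ} (hK : LocallyIntegrable K μ) (hg : ContDiff ℝ 1 g) (hgc : HasCompactSupport g)
    (x v : G) :
    fderiv ℝ (K ⋆[ContinuousLinearMap.mul ℝ ℝ, μ] g) x v
      = (K ⋆[ContinuousLinearMap.mul ℝ ℝ, μ] (fderiv ℝ g · v)) x := by
  have hexists := (hgc.fderiv ℝ).convolutionExists_right
    ((ContinuousLinearMap.mul ℝ ℝ).precompR G) hK (hg.continuous_fderiv one_ne_zero) x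
  rw [(hgc.hasFDerivAt_convolution_right _ hK hg x).fderiv, convolution_def, convolution_def,
    ContinuousLinearMap.integral_apply hexists]
  rfl

end General

namespace StokesPressure

theorem contDiff_pd {m n : WithTop ℕ∞} {f : E3 → ℝ} (hf : ContDiff ℝ n f) (hmn : m + 1 ≤ n)
    (i : Fin 3) : ContDiff ℝ m (pd i f) :=
  (hf.fderiv_right hmn).clm_apply contDiff_const

theorem continuous_pd {n : WithTop ℕ∞} {f : E3 → ℝ} (hf : ContDiff ℝ n f) (hn : n ≠ 0)
    (i : Fin 3) : Continuous (pd i f) :=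
  (hf.continuous_fderiv hn).clm_apply continuous_const

theorem hasCompactSupport_pd {f : E3 → ℝ} (hf : HasCompactSupport f) (i : Fin 3) :
    HasCompactSupport (pd i f) :=
  hf.fderiv_apply (𝕜 := ℝ) (e3 i)

theorem pd_pd_comm {ψ : E3 → ℝ} (hψ : ContDiff ℝ 2 ψ) (i j : Fin 3) (t : E3) :
    pd i (pd j ψ) t = pd j (pd i ψ) t :=
  fderiv_fderiv_apply_comm hψ t (e3 j) (e3 i)

theorem pd_of_hasFDerivAt {f : E3 → ℝ} {c : ℝ} {t : E3}
    (hf : HasFDerivAt f (c • innerSL ℝ t) t) (i : Fin 3) : pd i f t = c * t i := by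
  simp [pd, hf.fderiv, e3, EuclideanSpace.inner_single_right]

theorem integral_mul_pd_eq_neg {u ψ : E3 → ℝ} (hu : ContDiff ℝ 1 u) (hψ : ContDiff ℝ 1 ψ)
    (hψc : HasCompactSupport ψ) (i : Fin 3) :
    ∫ t, u t * pd i ψ t = -∫ t, pd i u t * ψ t :=
  integral_mul_fderiv_eq_neg_of_hasCompactSupport hu hψ hψc (e3 i)

/- For `ε ≠ 0`: regularisations of the Newtonian potential, of the pressure kernel, and of the
Dirac mass at `0`. -/
def newtonReg (ε : ℝ) (t : E3) : ℝ := (4 * π)⁻¹ * (‖t‖ ^ 2 + ε ^ 2) ^ (-(1 / 2) : ℝ)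

def kernel (i : Fin 3) (ε : ℝ) (t : E3) : ℝ :=
  -(4 * π)⁻¹ * t i * (‖t‖ ^ 2 + ε ^ 2) ^ (-(3 / 2) : ℝ)

def mollifier (ε : ℝ) (t : E3) : ℝ :=
  3 * (4 * π)⁻¹ * ε ^ 2 * (‖t‖ ^ 2 + ε ^ 2) ^ (-(5 / 2) : ℝ)

/- At `y = x` both sides are junk `0`: `qF` via division by `0`, `kernel` via `0 ^ (-3/2) = 0`. -/
theorem qF_eq_kernel (i : Fin 3) (y x : E3) : qF i y x = kernel i 0 (y - x) := by
  have h : (‖y - x‖ ^ 2) ^ (-(3 / 2) : ℝ) = (‖y - x‖ ^ 3)⁻¹ := by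
    rw [Real.rpow_neg (by positivity), ← Real.rpow_natCast, ← Real.rpow_natCast,
      ← Real.rpow_mul (norm_nonneg _)]
    norm_num
  rw [qF, kernel, PiLp.sub_apply, zero_pow two_ne_zero, add_zero, h]
  field_simp

theorem contDiff_newtonReg {ε : ℝ} (hε : ε ≠ 0) : ContDiff ℝ 2 (newtonReg ε) :=
  contDiff_const.mul (contDiff_rpow_norm_sq_add_sq hε _)

theorem contDiff_kernel (i : Fin 3) {ε : ℝ} (hε : ε ≠ 0) : ContDiff ℝ 1 (kernel i ε) := by
  have := contDiff_rpow_norm_sq_add_sq (F := E3) hε (-(3 / 2)) (n := 1)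
  unfold kernel
  fun_prop

theorem measurable_kernel (i : Fin 3) (ε : ℝ) : Measurable (kernel i ε) := by
  unfold kernel
  fun_prop

theorem pd_newtonReg {ε : ℝ} (hε : ε ≠ 0) (i : Fin 3) (t : E3) :
    pd i (newtonReg ε) t = kernel i ε t := by
  have h : HasFDerivAt (newtonReg ε) _ t :=
    (hasFDerivAt_rpow_norm_sq_add_sq hε (-(1 / 2)) t).const_mul (4 * π)⁻¹
  rw [smul_smul] at h
  rw [pd_of_hasFDerivAt h, kernel]
  norm_num
  ring

theorem pd_kernel_self {ε : ℝ} (hε : ε ≠ 0) (i : Fin 3) (t : E3) :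
    pd i (kernel i ε) t
      = -(4 * π)⁻¹ * (‖t‖ ^ 2 + ε ^ 2 - 3 * t i ^ 2) * (‖t‖ ^ 2 + ε ^ 2) ^ (-(5 / 2) : ℝ) := by
  have hc : HasFDerivAt (fun s : E3 => -(4 * π)⁻¹ * s i)
      ((-(4 * π)⁻¹) • (EuclideanSpace.proj i : E3 →L[ℝ] ℝ)) t :=
    (EuclideanSpace.proj i : E3 →L[ℝ] ℝ).hasFDerivAt.const_mul _
  have hk : HasFDerivAt (kernel i ε) _ t :=
    hc.mul (hasFDerivAt_rpow_norm_sq_add_sq hε (-(3 / 2)) t)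
  rw [pd, hk.fderiv]
  simp [e3, EuclideanSpace.inner_single_right, rpow_neg_three_halves_eq_mul
    (by positivity : 0 < ‖t‖ ^ 2 + ε ^ 2)]
  norm_num
  ring

theorem sum_pd_kernel {ε : ℝ} (hε : ε ≠ 0) (t : E3) :
    ∑ i, pd i (kernel i ε) t = -mollifier ε t := by
  have hnorm : ‖t‖ ^ 2 = t 0 ^ 2 + t 1 ^ 2 + t 2 ^ 2 := by
    simp [EuclideanSpace.norm_sq_eq, Fin.sum_univ_three]
  simp only [Fin.sum_univ_three, pd_kernel_self hε, mollifier]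
  rw [hnorm]
  ring

theorem abs_kernel_le (i : Fin 3) (ε : ℝ) (t : E3) :
    |kernel i ε t| ≤ (4 * π)⁻¹ * ‖t‖ ^ (-2 : ℝ) := by
  rcases eq_or_ne t 0 with rfl | ht
  · simp [kernel]
  have hnorm : 0 < ‖t‖ := norm_pos_iff.mpr ht
  have hcoord : |t i| ≤ ‖t‖ := by
    simpa only [Real.norm_eq_abs] using PiLp.norm_apply_le t i
  calc |kernel i ε t| = (4 * π)⁻¹ * |t i| * (‖t‖ ^ 2 + ε ^ 2) ^ (-(3 / 2) : ℝ) := by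
        rw [kernel, abs_mul, abs_mul, abs_neg, abs_of_pos (by positivity : (0 : ℝ) < (4 * π)⁻¹),
          abs_of_nonneg (Real.rpow_nonneg (by positivity) _)]
    _ ≤ (4 * π)⁻¹ * ‖t‖ * ‖t‖ ^ (2 * -(3 / 2) : ℝ) := by
        gcongr
        exact rpow_sq_add_sq_le (by norm_num) ε hnorm
    _ = (4 * π)⁻¹ * ‖t‖ ^ (-2 : ℝ) := by
        rw [mul_assoc, ← Real.rpow_one_add' hnorm.le (by norm_num)]
        norm_num

theorem locallyIntegrable_norm_rpow_neg_two :
    LocallyIntegrable (fun t : E3 => ‖t‖ ^ (-2 : ℝ)) :=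
  locallyIntegrable_of_norm_le_rpow (C := 1) (α := 2) (by simp) (by simp; norm_num)
    (ae_of_all _ fun t => by simp) (continuous_norm.measurable.pow_const _).aestronglyMeasurable

theorem locallyIntegrable_kernel (i : Fin 3) (ε : ℝ) : LocallyIntegrable (kernel i ε) :=
  locallyIntegrable_of_norm_le_rpow (C := (4 * π)⁻¹) (α := 2) (by simp) (by simp; norm_num)
    (ae_of_all _ fun t => abs_kernel_le i ε t) (measurable_kernel i ε).aestronglyMeasurable

theorem tendsto_kernel (i : Fin 3) {t : E3} (ht : t ≠ 0) :
    Tendsto (fun ε => kernel i ε t) (𝓝 0) (𝓝 (kernel i 0 t)) := by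
  have hbase : ‖t‖ ^ 2 + (0 : ℝ) ^ 2 ≠ 0 := by simpa using ht
  have hcont : ContinuousAt (fun ε : ℝ => (‖t‖ ^ 2 + ε ^ 2) ^ (-(3 / 2) : ℝ)) 0 :=
    (continuous_const.add (continuous_pow 2)).continuousAt.rpow_const (Or.inl hbase)
  exact hcont.tendsto.const_mul _

theorem tendsto_integral_kernel_mul (i : Fin 3) {ψ : E3 → ℝ} (hψ : Continuous ψ)
    (hψc : HasCompactSupport ψ) :
    Tendsto (fun ε => ∫ t, kernel i ε t * ψ t) (𝓝 0) (𝓝 (∫ t, kernel i 0 t * ψ t)) := by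
  refine tendsto_integral_filter_of_dominated_convergence
    (fun t => (4 * π)⁻¹ * ‖t‖ ^ (-2 : ℝ) * |ψ t|)
    (Eventually.of_forall fun ε =>
      ((measurable_kernel i ε).mul hψ.measurable).aestronglyMeasurable)
    (Eventually.of_forall fun ε => ae_of_all _ fun t => ?_) ?_ ?_
  · rw [Real.norm_eq_abs, abs_mul]
    exact mul_le_mul_of_nonneg_right (abs_kernel_le i ε t) (abs_nonneg _)
  · simpa only [smul_eq_mul, mul_assoc] using
      (locallyIntegrable_norm_rpow_neg_two.integrable_smul_right_of_hasCompactSupport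
        hψ.abs hψc.abs).const_mul (4 * π)⁻¹
  · filter_upwards [compl_mem_ae_iff.mpr (measure_singleton (0 : E3))] with t ht
    exact (tendsto_kernel i ht).mul_const (ψ t)

theorem mollifier_nonneg (ε : ℝ) (t : E3) : 0 ≤ mollifier ε t := by
  unfold mollifier
  have := Real.rpow_nonneg (by positivity : 0 ≤ ‖t‖ ^ 2 + ε ^ 2) (-(5 / 2))
  positivity

theorem mollifier_eq_rescale {ε : ℝ} (hε : 0 < ε) (t : E3) :
    mollifier ε t = ε⁻¹ ^ 3 * mollifier 1 (ε⁻¹ • t) := by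
  have hbase : ‖ε⁻¹ • t‖ ^ 2 + 1 ^ 2 = (ε ^ 2)⁻¹ * (‖t‖ ^ 2 + ε ^ 2) := by
    rw [norm_smul, Real.norm_of_nonneg (inv_nonneg.2 hε.le)]
    field_simp
  have hpow : ((ε ^ 2)⁻¹) ^ (-(5 / 2) : ℝ) = ε ^ 5 := by
    rw [Real.inv_rpow (by positivity), ← Real.rpow_neg (by positivity), neg_neg,
      ← Real.rpow_natCast, ← Real.rpow_mul hε.le, ← Real.rpow_natCast]
    norm_num
  rw [mollifier, mollifier, hbase, Real.mul_rpow (by positivity) (by positivity), hpow]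
  field_simp

theorem tendsto_sq_div_sq_add_one : Tendsto (fun r : ℝ => r ^ 2 / (r ^ 2 + 1)) atTop (𝓝 1) := by
  have h : Tendsto (fun r : ℝ => 1 - (r ^ 2 + 1)⁻¹) atTop (𝓝 (1 - 0)) :=
    tendsto_const_nhds.sub (tendsto_inv_atTop_zero.comp
      (tendsto_atTop_add_const_right _ 1 (tendsto_pow_atTop two_ne_zero)))
  rw [sub_zero] at h
  refine h.congr fun r => ?_
  field_simp
  ring

theorem integral_Ioi_sq_mul_rpow :
    ∫ r in Set.Ioi (0 : ℝ), r ^ 2 * (r ^ 2 + 1) ^ (-(5 / 2) : ℝ) = 1 / 3 := by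
  set g : ℝ → ℝ := fun r => r ^ 3 * (r ^ 2 + 1) ^ (-(3 / 2) : ℝ) / 3
  have hderiv (r : ℝ) : HasDerivAt g (r ^ 2 * (r ^ 2 + 1) ^ (-(5 / 2) : ℝ)) r := by
    have hpos : 0 < r ^ 2 + 1 := by positivity
    have h : HasDerivAt g _ r := ((hasDerivAt_pow 3 r).mul (((hasDerivAt_pow 2 r).add_const
      1).rpow_const (p := -(3 / 2)) (Or.inl hpos.ne'))).div_const 3
    refine h.congr_deriv ?_
    rw [show (-(3 / 2) : ℝ) - 1 = -(5 / 2) by norm_num, rpow_neg_three_halves_eq_mul hpos]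
    push_cast
    ring
  have hlim : Tendsto g atTop (𝓝 (1 / 3)) := by
    have h := ((Real.continuousAt_rpow_const 1 (3 / 2) (Or.inl one_ne_zero)).tendsto.comp
      tendsto_sq_div_sq_add_one).div_const 3
    rw [Real.one_rpow] at h
    refine h.congr' ?_
    filter_upwards [eventually_ge_atTop 0] with r hr
    simp only [Function.comp, g]
    rw [Real.div_rpow (by positivity) (by positivity), Real.rpow_neg (by positivity),
      ← Real.rpow_natCast, ← Real.rpow_mul hr]
    norm_num
    ring
  rw [integral_Ioi_of_hasDerivAt_of_nonneg (hderiv 0).continuousAt.continuousWithinAt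
    (fun r _ => hderiv r) (fun r _ => by positivity) hlim]
  simp [g]

theorem integral_mollifier_one : ∫ t : E3, mollifier 1 t = 1 := by
  have hpolar := integral_fun_norm_addHaar (volume : Measure E3)
    (fun r => 3 * (4 * π)⁻¹ * 1 ^ 2 * (r ^ 2 + 1 ^ 2) ^ (-(5 / 2) : ℝ))
  have hball : (volume : Measure E3).real (Metric.ball 0 1) = 4 / 3 * π := by
    simp [Measure.real, EuclideanSpace.volume_ball_fin_three,
      ENNReal.toReal_ofReal (by positivity : 0 ≤ π * 4 / 3)]
    ring
  have hradial : ∫ r in Set.Ioi (0 : ℝ),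
      r ^ (3 - 1) • (3 * (4 * π)⁻¹ * 1 ^ 2 * (r ^ 2 + 1 ^ 2) ^ (-(5 / 2) : ℝ))
      = 3 * (4 * π)⁻¹ * (1 / 3) := by
    rw [← integral_Ioi_sq_mul_rpow, ← integral_const_mul]
    congr with r
    simp only [smul_eq_mul, one_pow, mul_one]
    ring
  simp only [mollifier]
  rw [hpolar, hball, finrank_euclideanSpace_fin, hradial, nsmul_eq_mul, smul_eq_mul]
  field_simp
  norm_num

theorem tendsto_norm_pow_mul_mollifier :
    Tendsto (fun x : E3 => ‖x‖ ^ 3 * mollifier 1 x) (Bornology.cobounded E3) (𝓝 0) := by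
  have hbound : Tendsto (fun x : E3 => 3 * (4 * π)⁻¹ * ‖x‖ ^ (-2 : ℝ))
      (Bornology.cobounded E3) (𝓝 (3 * (4 * π)⁻¹ * 0)) :=
    ((tendsto_rpow_neg_atTop two_pos).comp tendsto_norm_cobounded_atTop).const_mul _
  rw [mul_zero] at hbound
  refine tendsto_of_tendsto_of_tendsto_of_le_of_le' tendsto_const_nhds hbound
    (Eventually.of_forall fun x => mul_nonneg (by positivity) (mollifier_nonneg 1 x)) ?_
  filter_upwards [Bornology.eventually_ne_cobounded 0] with x hx
  have hnorm : 0 < ‖x‖ := norm_pos_iff.mpr hx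
  calc ‖x‖ ^ 3 * mollifier 1 x
      ≤ ‖x‖ ^ 3 * (3 * (4 * π)⁻¹ * ‖x‖ ^ (2 * -(5 / 2) : ℝ)) := by
        rw [mollifier, one_pow, mul_one]
        gcongr
        simpa using rpow_sq_add_sq_le (a := -(5 / 2)) (by norm_num) 1 hnorm
    _ = 3 * (4 * π)⁻¹ * ‖x‖ ^ (-2 : ℝ) := by
        rw [mul_left_comm, ← Real.rpow_natCast, ← Real.rpow_add hnorm]
        norm_num

theorem tendsto_integral_mollifier_mul {ψ : E3 → ℝ} (hψ : Integrable ψ)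
    (hψ0 : ContinuousAt ψ 0) :
    Tendsto (fun ε => ∫ t, mollifier ε t * ψ t) (𝓝[>] 0) (𝓝 (ψ 0)) := by
  have h := (tendsto_integral_comp_smul_smul_of_integrable (mollifier_nonneg 1)
    integral_mollifier_one (by simpa using tendsto_norm_pow_mul_mollifier) hψ hψ0).comp
    tendsto_inv_nhdsGT_zero
  refine h.congr' ?_
  filter_upwards [self_mem_nhdsWithin] with ε (hε : 0 < ε)
  simp [mollifier_eq_rescale hε]

theorem integral_kernel_mul_pd_comm {ψ : E3 → ℝ} (hψ : ContDiff ℝ 2 ψ)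
    (hψc : HasCompactSupport ψ) (i j : Fin 3) :
    ∫ t, kernel j 0 t * pd i ψ t = ∫ t, kernel i 0 t * pd j ψ t := by
  have hreg : ∀ ε ≠ 0, ∫ t, kernel j ε t * pd i ψ t = ∫ t, kernel i ε t * pd j ψ t := by
    intro ε hε
    have hN (a b : Fin 3) :
        ∫ t, kernel a ε t * pd b ψ t = -∫ t, newtonReg ε t * pd a (pd b ψ) t := by
      rw [integral_mul_pd_eq_neg ((contDiff_newtonReg hε).of_le one_le_two)
        (contDiff_pd hψ (by norm_num) b) (hasCompactSupport_pd hψc b), neg_neg]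
      simp only [pd_newtonReg hε]
    rw [hN, hN]
    simp only [pd_pd_comm hψ j i]
  have hlim (a b : Fin 3) := (tendsto_integral_kernel_mul a (continuous_pd hψ two_ne_zero b)
    (hasCompactSupport_pd hψc b)).mono_left (nhdsWithin_le_nhds (s := {0}ᶜ))
  refine tendsto_nhds_unique ((hlim j i).congr' ?_) (hlim i j)
  filter_upwards [self_mem_nhdsWithin] with ε hε using hreg ε hε

theorem sum_integral_kernel_mul_pd {ψ : E3 → ℝ} (hψ : ContDiff ℝ 1 ψ)
    (hψc : HasCompactSupport ψ) :
    ∑ i, ∫ t, kernel i 0 t * pd i ψ t = ψ 0 := by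
  have hreg : ∀ ε ≠ 0, ∑ i, ∫ t, kernel i ε t * pd i ψ t = ∫ t, mollifier ε t * ψ t := by
    intro ε hε
    have hint (i : Fin 3) : Integrable (fun t => pd i (kernel i ε) t * ψ t) :=
      ((continuous_pd (contDiff_kernel i hε) one_ne_zero i).mul hψ.continuous
        ).integrable_of_hasCompactSupport hψc.mul_left
    simp only [integral_mul_pd_eq_neg (contDiff_kernel _ hε) hψ hψc, Finset.sum_neg_distrib,
      ← integral_finsetSum _ fun i _ => hint i, ← Finset.sum_mul, sum_pd_kernel hε]
    simp [integral_neg]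
  have hlim : Tendsto (fun ε => ∑ i, ∫ t, kernel i ε t * pd i ψ t) (𝓝[>] 0)
      (𝓝 (∑ i, ∫ t, kernel i 0 t * pd i ψ t)) :=
    tendsto_finsetSum _ fun i _ => (tendsto_integral_kernel_mul i
      (continuous_pd hψ one_ne_zero i) (hasCompactSupport_pd hψc i)).mono_left nhdsWithin_le_nhds
  refine tendsto_nhds_unique hlim ((tendsto_integral_mollifier_mul
    (hψ.continuous.integrable_of_hasCompactSupport hψc) hψ.continuous.continuousAt).congr' ?_)
  filter_upwards [self_mem_nhdsWithin] with ε (hε : 0 < ε) using (hreg ε hε.ne').symm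

def pressurePot (g : E3 → ℝ) (i : Fin 3) : E3 → ℝ :=
  kernel i 0 ⋆[ContinuousLinearMap.mul ℝ ℝ] g

theorem integral_qF_mul_eq_pressurePot (i : Fin 3) (g : E3 → ℝ) (y : E3) :
    ∫ x, qF i y x * g x = pressurePot g i y := by
  rw [pressurePot, convolution_def, ← integral_sub_left_eq_self _ volume y]
  simp [qF_eq_kernel]

theorem contDiff_pressurePot {n : ℕ∞} {g : E3 → ℝ} (hg : ContDiff ℝ n g)
    (hgc : HasCompactSupport g) (i : Fin 3) : ContDiff ℝ n (pressurePot g i) :=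
  hgc.contDiff_convolution_right _ (locallyIntegrable_kernel i 0) hg

theorem pd_pressurePot {g : E3 → ℝ} (hg : ContDiff ℝ 1 g) (hgc : HasCompactSupport g)
    (i m : Fin 3) (y : E3) : pd m (pressurePot g i) y = pressurePot (pd m g) i y :=
  fderiv_convolution_mul_apply (locallyIntegrable_kernel i 0) hg hgc y (e3 m)

theorem pd_neg_pressurePot {g : E3 → ℝ} (hg : ContDiff ℝ 1 g) (hgc : HasCompactSupport g)
    (i m : Fin 3) : pd m (fun z => -pressurePot g i z) = fun z => -pressurePot (pd m g) i z := by
  funext z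
  rw [pd, fderiv_fun_neg, neg_apply, ← pd, pd_pressurePot hg hgc]

theorem contDiff_comp_sub_left {n : WithTop ℕ∞} {g : E3 → ℝ} (hg : ContDiff ℝ n g) (y : E3) :
    ContDiff ℝ n (fun s => g (y - s)) :=
  hg.comp (contDiff_const.sub contDiff_id)

theorem hasCompactSupport_comp_sub_left {g : E3 → ℝ} (hgc : HasCompactSupport g) (y : E3) :
    HasCompactSupport (fun s => g (y - s)) :=
  hgc.comp_homeomorph (Homeomorph.subLeft y)

theorem pd_comp_sub_left {g : E3 → ℝ} (hg : Differentiable ℝ g) (i : Fin 3) (y t : E3) :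
    pd i (fun s => g (y - s)) t = -pd i g (y - t) := by
  have h : HasFDerivAt (fun s => g (y - s)) _ t :=
    (hg (y - t)).hasFDerivAt.comp t ((hasFDerivAt_id t).const_sub y)
  simp [pd, h.fderiv]

theorem pressurePot_pd_eq {g : E3 → ℝ} (hg : Differentiable ℝ g) (i m : Fin 3) (y : E3) :
    pressurePot (pd m g) i y = -∫ t, kernel i 0 t * pd m (fun s => g (y - s)) t := by
  simp [pressurePot, convolution_def, pd_comp_sub_left hg, integral_neg]

theorem pressurePot_pd_comm {g : E3 → ℝ} (hg : ContDiff ℝ 2 g) (hgc : HasCompactSupport g)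
    (i j : Fin 3) (y : E3) : pressurePot (pd i g) j y = pressurePot (pd j g) i y := by
  rw [pressurePot_pd_eq (hg.differentiable two_ne_zero), pressurePot_pd_eq
    (hg.differentiable two_ne_zero), integral_kernel_mul_pd_comm (contDiff_comp_sub_left hg y)
    (hasCompactSupport_comp_sub_left hgc y)]

theorem sum_pressurePot_pd {g : E3 → ℝ} (hg : ContDiff ℝ 1 g) (hgc : HasCompactSupport g)
    (y : E3) : ∑ i, pressurePot (pd i g) i y = -g y := by
  simp only [pressurePot_pd_eq (hg.differentiable one_ne_zero), Finset.sum_neg_distrib,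
    sum_integral_kernel_mul_pd (contDiff_comp_sub_left hg y)
      (hasCompactSupport_comp_sub_left hgc y), sub_zero]

theorem sum_pd_neg_pressurePot {g : E3 → ℝ} (hg : ContDiff ℝ 1 g) (hgc : HasCompactSupport g)
    (z : E3) : ∑ i, pd i (fun w => -pressurePot g i w) z = g z := by
  simp only [pd_neg_pressurePot hg hgc, Finset.sum_neg_distrib, sum_pressurePot_pd hg hgc,
    neg_neg]

theorem lap_neg_pressurePot {g : E3 → ℝ} (hg : ContDiff ℝ 3 g) (hgc : HasCompactSupport g)
    (j : Fin 3) (y : E3) : lap (fun z => -pressurePot g j z) y = pd j g y := by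
  have hg1 : ContDiff ℝ 1 g := hg.of_le (by norm_num)
  have hpd2 (i : Fin 3) : ContDiff ℝ 2 (pd i g) := contDiff_pd hg (by norm_num) i
  have hpdc (i : Fin 3) : HasCompactSupport (pd i g) := hasCompactSupport_pd hgc i
  have hswap (i : Fin 3) : pd j (pd i g) = pd i (pd j g) :=
    funext (pd_pd_comm (hg.of_le (by norm_num)) j i)
  calc lap (fun z => -pressurePot g j z) y
      = ∑ i, -pressurePot (pd i (pd i g)) j y := by
        simp only [lap, pd_neg_pressurePot hg1 hgc,
          pd_neg_pressurePot ((hpd2 _).of_le one_le_two) (hpdc _)]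
    _ = -∑ i, pressurePot (pd i (pd j g)) i y := by
        simp only [pressurePot_pd_comm (hpd2 _) (hpdc _) _ j, hswap, Finset.sum_neg_distrib]
    _ = pd j g y := by
        rw [sum_pressurePot_pd ((hpd2 j).of_le one_le_two) (hpdc j), neg_neg]

end StokesPressure

/-- For every f ∈ C_c^∞(ℝ³), the pair of pressure p = (4/3)f and velocity
v = -Q̊f, with (Q̊f)_j(y) = ∫ q̊^j(y,x) f(x) dx, satisfies the homogeneous constant
viscosity compressible Stokes system on ℝ³:
Å_j((4/3)f, -Q̊f)(y) = Δ(-Q̊f)_j(y) + (1/3)∂_j div(-Q̊f)(y) - (4/3)∂_j f(y) = 0. -/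
theorem stmt13 (f : E3 → ℝ) (hf : ContDiff ℝ (⊤ : ℕ∞) f) (hc : HasCompactSupport f) :
    (∀ i : Fin 3, ContDiff ℝ (⊤ : ℕ∞) (fun y : E3 => ∫ x : E3, qF i y x * f x)) ∧
    ∀ (j : Fin 3) (y : E3),
      lap (fun z : E3 => -(∫ x : E3, qF j z x * f x)) y
        + (1 / 3) * pd j (fun z : E3 =>
            ∑ i : Fin 3, pd i (fun w : E3 => -(∫ x : E3, qF i w x * f x)) z) y
        - (4 / 3) * pd j f y = 0 := by
  simp only [StokesPressure.integral_qF_mul_eq_pressurePot]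
  refine ⟨StokesPressure.contDiff_pressurePot hf hc, fun j y => ?_⟩
  have hf3 : ContDiff ℝ 3 f := hf.of_le (WithTop.coe_le_coe.mpr le_top)
  rw [StokesPressure.lap_neg_pressurePot hf3 hc,
    funext (StokesPressure.sum_pd_neg_pressurePot (hf3.of_le (by norm_num)) hc)]
  ring
end
end
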